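/- Let X ⊆ D with M|_{X×X} symmetric, not pure, no row containing both 0 and 1, and no length-2 derectangularising sequence among subsets of X. Let X_0 be the set of rows of M|_{X×X} containing a 0. Then there is no odd-length sequence d_1, …, d_ℓ ∈ X_0 with M_{d_1,d_2} = M_{d_2,d_3} = ⋯ = M_{d_{ℓ-1},d_ℓ} = M_{d_ℓ,d_1} = *. Consequently, in any M-partition of a graph restricted to parts in X, the vertices assigned to parts in X_0 induce a bipartite graph. -/

import Mathlib

/-!
Since no row of `X` mixes `0`s and `1`s, the rows `X₀` that contain a `0` contain no `1`, so
`M|_{X₀×X₀}` is pure and its `*`-entries form a symmetric rectangular relation. Rectangularity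
closes odd `*`-walks two steps at a time, so an odd `*`-cycle through `a` forces `M a a = *`.
Impurity of `M|_{X×X}` gives `p, q` with `M p q = 1`; their rows contain no `0`, so
`M a p = M a q = *` and `M|_{{a,p,q}²}` is pure. Its `*`-entries `(a,a), (a,q), (p,a)` would then
force `M p q = *`. An odd closed walk among the vertices sent into `X₀` would be such a cycle.
-/

inductive Entry | zero | one | star
deriving DecidableEq

def Rectangular {α β : Type*} (R : Set (α × β)) : Prop :=
  ∀ i j i' j', (i, i') ∈ R → (i, j') ∈ R → (j, i') ∈ R → (j, j') ∈ R

def H {D : Type*} (M : D → D → Entry) (X Y : Set D) : Set (D × D) :=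
  {p | p.1 ∈ X ∧ p.2 ∈ Y ∧ M p.1 p.2 = Entry.star}

def MatPure {D : Type*} (M : D → D → Entry) (X Y : Set D) : Prop :=
  (∀ i ∈ X, ∀ j ∈ Y, M i j ≠ Entry.zero) ∨ (∀ i ∈ X, ∀ j ∈ Y, M i j ≠ Entry.one)

theorem Entry.eq_star_of_ne_zero_of_ne_one {e : Entry} (h0 : e ≠ .zero) (h1 : e ≠ .one) :
    e = .star := by
  cases e <;> simp_all

theorem Rectangular.mem_of_odd_chain {α : Type*} {S : Set (α × α)} (hS : Rectangular S)
    (hsymm : ∀ x y, (x, y) ∈ S → (y, x) ∈ S) (e : ℕ → α) (m : ℕ)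
    (he : ∀ i < 2 * m + 1, (e i, e (i + 1)) ∈ S) : (e 0, e (2 * m + 1)) ∈ S := by
  induction m with
  | zero => exact he 0 (by omega)
  | succ m ih =>
    have hfirst := ih fun i hi => he i (by omega)
    have hback := hsymm _ _ (he (2 * m + 1) (by omega))
    exact hS _ _ _ _ hback (he (2 * m + 2) (by omega)) hfirst

section

variable {D : Type*} {M : D → D → Entry} {X : Set D}

def zeroRows (M : D → D → Entry) (X : Set D) : Set D :=
  {x ∈ X | ∃ y ∈ X, M x y = Entry.zero}

theorem zeroRows_subset : zeroRows M X ⊆ X := fun _ hx => hx.1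

theorem ne_one_of_mem_zeroRows
    (hrow : ∀ i ∈ X, ¬ ((∃ j ∈ X, M i j = Entry.zero) ∧ (∃ j ∈ X, M i j = Entry.one)))
    {a b : D} (ha : a ∈ zeroRows M X) (hb : b ∈ X) : M a b ≠ Entry.one :=
  fun h => hrow a ha.1 ⟨ha.2, b, hb, h⟩

theorem swap_mem_H (hsym : ∀ i ∈ X, ∀ j ∈ X, M i j = M j i) {A : Set D} (hA : A ⊆ X)
    {x y : D} (h : (x, y) ∈ H M A A) : (y, x) ∈ H M A A :=
  ⟨h.2.1, h.1, (hsym x (hA h.1) y (hA h.2.1)) ▸ h.2.2⟩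

theorem rectangular_H_zeroRows
    (hrow : ∀ i ∈ X, ¬ ((∃ j ∈ X, M i j = Entry.zero) ∧ (∃ j ∈ X, M i j = Entry.one)))
    (hrect : ∀ A B : Set D, A ⊆ X → B ⊆ X → MatPure M A B → MatPure M A A →
      MatPure M B B → Rectangular (H M A B)) :
    Rectangular (H M (zeroRows M X) (zeroRows M X)) :=
  have hpure : MatPure M (zeroRows M X) (zeroRows M X) :=
    .inr fun _ hi _ hj => ne_one_of_mem_zeroRows hrow hi (zeroRows_subset hj)
  hrect _ _ zeroRows_subset zeroRows_subset hpure hpure hpure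

theorem ne_star_self_of_mem_zeroRows (hsym : ∀ i ∈ X, ∀ j ∈ X, M i j = M j i)
    (hnp : ¬ MatPure M X X)
    (hrow : ∀ i ∈ X, ¬ ((∃ j ∈ X, M i j = Entry.zero) ∧ (∃ j ∈ X, M i j = Entry.one)))
    (hrect : ∀ A B : Set D, A ⊆ X → B ⊆ X → MatPure M A B → MatPure M A A →
      MatPure M B B → Rectangular (H M A B))
    {a : D} (ha : a ∈ zeroRows M X) : M a a ≠ Entry.star := by
  intro haa
  obtain ⟨p, hp, q, hq, hpq⟩ : ∃ p ∈ X, ∃ q ∈ X, M p q = Entry.one := by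
    by_contra! h
    exact hnp (.inr h)
  have hqp : M q p = Entry.one := hsym p hp q hq ▸ hpq
  have hno_zero : ∀ z ∈ ({p, q} : Set D), ∀ w ∈ X, M z w ≠ Entry.zero := by
    rintro z (rfl | rfl) w hw h0
    · exact hrow z hp ⟨⟨w, hw, h0⟩, q, hq, hpq⟩
    · exact hrow z hq ⟨⟨w, hw, h0⟩, p, hp, hqp⟩
  have ha_star : ∀ z ∈ ({p, q} : Set D), M a z = Entry.star := by
    intro z hz
    have hzX : z ∈ X := by rcases hz with rfl | rfl <;> assumption
    refine Entry.eq_star_of_ne_zero_of_ne_one ?_ (ne_one_of_mem_zeroRows hrow ha hzX)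
    rw [hsym a ha.1 z hzX]
    exact hno_zero z hz a ha.1
  set S : Set D := {a, p, q}
  have hSX : S ⊆ X := by
    rintro z (rfl | rfl | rfl) <;> first | exact ha.1 | assumption
  have hpure : MatPure M S S := by
    refine .inl ?_
    rintro i (rfl | hi) j hj
    · rcases hj with rfl | hj
      · simp [haa]
      · simp [ha_star j hj]
    · exact hno_zero i hi j (hSX hj)
  have hpa : M p a = Entry.star := hsym a ha.1 p hp ▸ ha_star p (by simp)
  have hpq_star := (hrect S S hSX hSX hpure hpure hpure a p a q
    ⟨by simp [S], by simp [S], haa⟩ ⟨by simp [S], by simp [S], ha_star q (by simp)⟩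
    ⟨by simp [S], by simp [S], hpa⟩).2.2
  simp [hpq] at hpq_star

end

theorem no_odd_star_cycle_in_X0_general {D : Type} (M : D → D → Entry) (X : Set D)
    (hsym : ∀ i ∈ X, ∀ j ∈ X, M i j = M j i)
    (hnp : ¬ MatPure M X X)
    (hrow : ∀ i ∈ X, ¬ ((∃ j ∈ X, M i j = Entry.zero) ∧ (∃ j ∈ X, M i j = Entry.one)))
    (hrect : ∀ A B : Set D, A ⊆ X → B ⊆ X → MatPure M A B → MatPure M A A →
      MatPure M B B → Rectangular (H M A B)) :
    (¬ ∃ ℓ : ℕ, Odd ℓ ∧ ∃ d : ZMod ℓ → D,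
        (∀ i, d i ∈ {x ∈ X | ∃ y ∈ X, M x y = Entry.zero}) ∧
        (∀ i, M (d i) (d (i + 1)) = Entry.star)) ∧
    (∀ (V : Type) (G : SimpleGraph V) (σ : V → D),
      (∀ u, σ u ∈ X) →
      (∀ u w : V, u ≠ w →
        (G.Adj u w → M (σ u) (σ w) ≠ Entry.zero) ∧
        (¬ G.Adj u w → M (σ u) (σ w) ≠ Entry.one)) →
      (SimpleGraph.induce {u : V | σ u ∈ {x ∈ X | ∃ y ∈ X, M x y = Entry.zero}} G).Colorable 2) := by
  have hS := rectangular_H_zeroRows hrow hrect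
  have hswap : ∀ x y, (x, y) ∈ H M (zeroRows M X) (zeroRows M X) → (y, x) ∈ _ :=
    fun _ _ => swap_mem_H hsym zeroRows_subset
  have hloop : ∀ a ∈ zeroRows M X, M a a ≠ Entry.star :=
    fun _ => ne_star_self_of_mem_zeroRows hsym hnp hrow hrect
  refine ⟨?_, fun V G σ hσ hpart => ?_⟩
  · rintro ⟨_, ⟨m, rfl⟩, d, hd, hstar⟩
    have hcycle := hS.mem_of_odd_chain hswap (fun i => d i) m fun i _ =>
      ⟨hd _, hd _, by simpa using hstar i⟩
    simp only [Nat.cast_zero, ZMod.natCast_self] at hcycle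
    exact hloop _ hcycle.1 hcycle.2.2
  · refine SimpleGraph.two_colorable_iff_forall_loop_even.2 fun u w => ?_
    by_contra hodd
    obtain ⟨m, hm⟩ := Nat.not_even_iff_odd.1 hodd
    have hcycle := hS.mem_of_odd_chain hswap (fun i => σ (w.getVert i)) m fun i hi => by
      have hadj := w.adj_getVert_succ (hm ▸ hi)
      have hv := (w.getVert i).2
      refine ⟨hv, (w.getVert (i + 1)).2, Entry.eq_star_of_ne_zero_of_ne_one
        ((hpart _ _ (G.ne_of_adj hadj)).1 hadj) (ne_one_of_mem_zeroRows hrow hv (hσ _))⟩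
    rw [← hm, w.getVert_length, w.getVert_zero] at hcycle
    exact hloop _ hcycle.1 hcycle.2.2

theorem no_odd_star_cycle_in_X0 {D : Type} [Fintype D] (M : D → D → Entry) (X : Set D)
    (hsym : ∀ i ∈ X, ∀ j ∈ X, M i j = M j i)
    (hnp : ¬ MatPure M X X)
    (hrow : ∀ i ∈ X, ¬ ((∃ j ∈ X, M i j = Entry.zero) ∧ (∃ j ∈ X, M i j = Entry.one)))
    (hrect : ∀ A B : Set D, A ⊆ X → B ⊆ X → MatPure M A B → MatPure M A A →
      MatPure M B B → Rectangular (H M A B)) :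
    (¬ ∃ ℓ : ℕ, Odd ℓ ∧ ∃ d : ZMod ℓ → D,
        (∀ i, d i ∈ {x ∈ X | ∃ y ∈ X, M x y = Entry.zero}) ∧
        (∀ i, M (d i) (d (i + 1)) = Entry.star)) ∧
    (∀ (V : Type) (G : SimpleGraph V) (σ : V → D),
      (∀ u, σ u ∈ X) →
      (∀ u w : V, u ≠ w →
        (G.Adj u w → M (σ u) (σ w) ≠ Entry.zero) ∧
        (¬ G.Adj u w → M (σ u) (σ w) ≠ Entry.one)) →
      (SimpleGraph.induce {u : V | σ u ∈ {x ∈ X | ∃ y ∈ X, M x y = Entry.zero}} G).Colorable 2) :=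
  no_odd_star_cycle_in_X0_general M X hsym hnp hrow hrect
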